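/- arXiv:1910.02822 — 2 statements merged into one kernel-verified Lean document; each statement's English description precedes it below -/
import Mathlib

section
/- Let M be an n×m matrix with strictly positive entries and let r ∈ ℝ^n, c ∈ ℝ^m be probability vectors with strictly positive entries. Then there exists a unique minimizer Φ(M,r,c) of D_KL(P‖M) over P ∈ U(r,c); moreover this minimizer has strictly positive entries and is a diagonal scaling of M, i.e., Φ(M,r,c)_ij = u_i · M_ij · v_j for some strictly positive vectors u, v. -/
/-!
`P ↦ D_KL(P‖M)` is continuous and strictly convex on the compact convex polytope `U(r,c)`,
which gives existence and uniqueness of the minimiser `P`. Since `x log x` has slope `-∞` at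
`0`, a zero entry of `P` could be removed by moving slightly towards the positive matrix
`r cᵀ`, so `P > 0`. At an interior minimiser the first-order condition says that
`log (P i j / M i j)` is orthogonal to every matrix with zero row and column sums, hence is of
the form `a i + b j`; exponentiating gives `P i j = exp (a i) * M i j * exp (b j)`.
-/

/-- Relative entropy `D_KL(P‖M) = Σ_{ij} P_ij log(P_ij/M_ij)` (real-valued version,
with `0 log 0 = 0`; adequate when `M` has strictly positive entries). -/
noncomputable def klReal {n m : ℕ} (P M : Matrix (Fin n) (Fin m) ℝ) : ℝ :=
  ∑ i, ∑ j, P i j * Real.log (P i j / M i j)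

/-- `U(r,c)`: nonnegative matrices with row sums `r` and column sums `c`. -/
def transportPolytope {n m : ℕ} (r : Fin n → ℝ) (c : Fin m → ℝ) :
    Set (Matrix (Fin n) (Fin m) ℝ) :=
  {P | (∀ i j, 0 ≤ P i j) ∧ (∀ i, ∑ j, P i j = r i) ∧ (∀ j, ∑ i, P i j = c j)}

open Real Finset Filter Topology

noncomputable def klTerm (m x : ℝ) : ℝ := x * log (x / m)

section klTerm

variable {m : ℝ}

lemma klTerm_eq (hm : 0 < m) (x : ℝ) : klTerm m x = x * log x - x * log m := by
  rcases eq_or_ne x 0 with rfl | hx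
  · simp [klTerm]
  · rw [klTerm, log_div hx hm.ne']
    ring

lemma continuous_klTerm (hm : 0 < m) : Continuous (klTerm m) := by
  rw [funext (klTerm_eq hm)]
  fun_prop

lemma hasDerivAt_klTerm (hm : 0 < m) {x : ℝ} (hx : 0 < x) :
    HasDerivAt (klTerm m) (log (x / m) + 1) x := by
  rw [funext (klTerm_eq hm), log_div hx.ne' hm.ne']
  exact ((hasDerivAt_mul_log hx.ne').fun_sub ((hasDerivAt_id' x).mul_const (log m))).congr_deriv
    (by ring)

lemma strictConvexOn_klTerm (hm : 0 < m) : StrictConvexOn ℝ (Set.Ici 0) (klTerm m) := by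
  rw [funext (klTerm_eq hm)]
  exact strictConvexOn_mul_log.sub_concaveOn
    ((LinearMap.mulRight ℝ (log m)).concaveOn (convex_Ici 0))

lemma klTerm_mul (hm : 0 < m) (q : ℝ) {t : ℝ} (ht : 0 < t) :
    klTerm m (t * q) = t * klTerm m q + t * q * log t := by
  rcases eq_or_ne q 0 with rfl | hq
  · simp [klTerm]
  · rw [klTerm, klTerm, mul_div_assoc, log_mul ht.ne' (div_ne_zero hq hm.ne')]
    ring

lemma klTerm_segment_le {p q t : ℝ} (hm : 0 < m) (hp : 0 ≤ p) (hq : 0 < q) (ht : 0 < t)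
    (ht1 : t ≤ 1) :
    klTerm m ((1 - t) * p + t * q) ≤
      (1 - t) * klTerm m p + t * klTerm m q + t * log t * (if p = 0 then q else 0) := by
  split_ifs with hp0
  · subst hp0
    have h0 : klTerm m 0 = 0 := by simp [klTerm]
    rw [mul_zero, zero_add, klTerm_mul hm q ht, h0]
    linarith
  · have hconv := (strictConvexOn_klTerm hm).convexOn.2 hp hq.le (sub_nonneg.2 ht1) ht.le (by ring)
    simpa using hconv

end klTerm

lemma strictConvexOn_pi_sum {ι : Type*} [Fintype ι] {E : ι → Type*} [∀ i, AddCommGroup (E i)]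
    [∀ i, Module ℝ (E i)] {s : ∀ i, Set (E i)} {f : ∀ i, E i → ℝ}
    (hf : ∀ i, StrictConvexOn ℝ (s i) (f i)) :
    StrictConvexOn ℝ (Set.univ.pi s) (fun x => ∑ i, f i (x i)) := by
  refine ⟨convex_pi fun i _ => (hf i).1, fun x hx y hy hxy a b ha hb hab => ?_⟩
  obtain ⟨i, hi⟩ := Function.ne_iff.1 hxy
  simp only [smul_eq_mul, mul_sum, ← sum_add_distrib]
  exact sum_lt_sum
    (fun j _ => (hf j).convexOn.2 (hx j trivial) (hy j trivial) ha.le hb.le hab)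
    ⟨i, mem_univ i, (hf i).2 (hx i trivial) (hy i trivial) hi ha hb hab⟩

lemma strictConvexOn_klReal {n m : ℕ} {M : Matrix (Fin n) (Fin m) ℝ} (hM : ∀ i j, 0 < M i j) :
    StrictConvexOn ℝ {P | ∀ i j, 0 ≤ P i j} (klReal · M) := by
  have hpi := strictConvexOn_pi_sum fun i =>
    strictConvexOn_pi_sum fun j => strictConvexOn_klTerm (hM i j)
  have hset : {P : Matrix (Fin n) (Fin m) ℝ | ∀ i j, 0 ≤ P i j} =
      Set.univ.pi fun _ => Set.univ.pi fun _ => Set.Ici 0 := by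
    ext P
    exact ⟨fun h i _ j _ => h i j, fun h i j => h i trivial j trivial⟩
  rw [hset]
  exact hpi

lemma continuous_klReal {n m : ℕ} {M : Matrix (Fin n) (Fin m) ℝ} (hM : ∀ i j, 0 < M i j) :
    Continuous (klReal · M) :=
  show Continuous fun P : Matrix (Fin n) (Fin m) ℝ => ∑ i, ∑ j, klTerm (M i j) (P i j) from
    continuous_finsetSum _ fun i _ => continuous_finsetSum _ fun j _ =>
      (continuous_klTerm (hM i j)).comp (by fun_prop)

section transportPolytope

variable {n m : ℕ} (r : Fin n → ℝ) (c : Fin m → ℝ)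

lemma convex_transportPolytope : Convex ℝ (transportPolytope r c) := by
  rintro P ⟨hP0, hPr, hPc⟩ Q ⟨hQ0, hQr, hQc⟩ a b ha hb hab
  refine ⟨fun i j => ?_, fun i => ?_, fun j => ?_⟩
  · exact add_nonneg (mul_nonneg ha (hP0 i j)) (mul_nonneg hb (hQ0 i j))
  · simp [sum_add_distrib, ← mul_sum, hPr, hQr, ← add_mul, hab]
  · simp [sum_add_distrib, ← mul_sum, hPc, hQc, ← add_mul, hab]

lemma isCompact_transportPolytope : IsCompact (transportPolytope r c) := by
  have hclosed : IsClosed (transportPolytope r c) := by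
    simp only [transportPolytope, Set.ofPred_and, Set.ofPred_forall]
    exact .inter (isClosed_iInter fun i => isClosed_iInter fun j => isClosed_le (by fun_prop)
      (by fun_prop)) (.inter (isClosed_iInter fun i => isClosed_eq (by fun_prop) (by fun_prop))
      (isClosed_iInter fun j => isClosed_eq (by fun_prop) (by fun_prop)))
  have hbdd : transportPolytope r c ⊆
      Set.univ.pi fun i : Fin n => Set.univ.pi fun _ : Fin m => Set.Icc 0 (r i) := by
    rintro P ⟨hP0, hPr, -⟩ i - j -
    exact ⟨hP0 i j, hPr i ▸ single_le_sum (fun j _ => hP0 i j) (mem_univ j)⟩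
  exact (isCompact_univ_pi fun i => isCompact_univ_pi fun _ => isCompact_Icc).of_isClosed_subset
    hclosed hbdd

lemma vecMulVec_mem_transportPolytope (hr : ∀ i, 0 ≤ r i) (hc : ∀ j, 0 ≤ c j)
    (hr1 : ∑ i, r i = 1) (hc1 : ∑ j, c j = 1) :
    Matrix.vecMulVec r c ∈ transportPolytope r c := by
  refine ⟨fun i j => ?_, fun i => ?_, fun j => ?_⟩
  · simpa [Matrix.vecMulVec_apply] using mul_nonneg (hr i) (hc j)
  · simp [Matrix.vecMulVec_apply, ← mul_sum, hc1]
  · simp [Matrix.vecMulVec_apply, ← sum_mul, hr1]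

end transportPolytope

section positivity

variable {n m : ℕ} {M P R : Matrix (Fin n) (Fin m) ℝ}

lemma klReal_segment_le (hM : ∀ i j, 0 < M i j) (hP : ∀ i j, 0 ≤ P i j) (hR : ∀ i j, 0 < R i j)
    {t : ℝ} (ht : 0 < t) (ht1 : t ≤ 1) :
    klReal ((1 - t) • P + t • R) M ≤ (1 - t) * klReal P M + t * klReal R M +
      t * log t * ∑ i, ∑ j, if P i j = 0 then R i j else 0 := by
  calc klReal ((1 - t) • P + t • R) M
      = ∑ i, ∑ j, klTerm (M i j) ((1 - t) * P i j + t * R i j) := rfl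
    _ ≤ ∑ i, ∑ j, ((1 - t) * klTerm (M i j) (P i j) + t * klTerm (M i j) (R i j) +
          t * log t * if P i j = 0 then R i j else 0) :=
      sum_le_sum fun i _ => sum_le_sum fun j _ =>
        klTerm_segment_le (hM i j) (hP i j) (hR i j) ht ht1
    _ = _ := by simp only [sum_add_distrib, ← mul_sum]; rfl

lemma pos_of_isMinOn_klReal {S : Set (Matrix (Fin n) (Fin m) ℝ)} (hM : ∀ i j, 0 < M i j)
    (hS : Convex ℝ S) (hS0 : ∀ Q ∈ S, ∀ i j, 0 ≤ Q i j) (hRS : R ∈ S) (hR : ∀ i j, 0 < R i j)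
    (hPS : P ∈ S) (hP : IsMinOn (klReal · M) S P) : ∀ i j, 0 < P i j := by
  by_contra! h
  obtain ⟨i₀, j₀, hij⟩ := h
  set s := ∑ i, ∑ j, if P i j = 0 then R i j else 0
  have hs : 0 < s := by
    have hnonneg : ∀ i j, 0 ≤ if P i j = 0 then R i j else 0 := fun i j => by
      split_ifs <;> simp [(hR i j).le]
    refine sum_pos' (fun i _ => sum_nonneg fun j _ => hnonneg i j) ⟨i₀, mem_univ _, ?_⟩
    refine sum_pos' (fun j _ => hnonneg i₀ j) ⟨j₀, mem_univ _, ?_⟩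
    simp [le_antisymm hij (hS0 P hPS i₀ j₀), hR i₀ j₀]
  have hgap : ∀ t ∈ Set.Ioo (0 : ℝ) 1, klReal P M - klReal R M ≤ s * log t := by
    rintro t ⟨ht0, ht1⟩
    have hmin := isMinOn_iff.1 hP _ (hS hPS hRS (sub_nonneg.2 ht1.le) ht0.le (by ring))
    have hseg := klReal_segment_le hM (hS0 P hPS) hR ht0 ht1.le
    have hscaled : t * (klReal P M - klReal R M - s * log t) ≤ 0 := by linarith
    linarith [nonpos_of_mul_nonpos_right hscaled ht0]
  obtain ⟨t, hlt, ht⟩ := (((tendsto_log_nhdsGT_zero.const_mul_atBot hs).eventually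
    (eventually_lt_atBot (klReal P M - klReal R M))).and (Ioo_mem_nhdsGT one_pos)).exists
  linarith [hgap t ht]

end positivity

section firstOrder

variable {n m : ℕ} {M P : Matrix (Fin n) (Fin m) ℝ} {r : Fin n → ℝ} {c : Fin m → ℝ}

lemma hasDerivAt_klReal_add_smul (hM : ∀ i j, 0 < M i j) (hP : ∀ i j, 0 < P i j)
    (D : Matrix (Fin n) (Fin m) ℝ) :
    HasDerivAt (fun t : ℝ => klReal (P + t • D) M)
      (∑ i, ∑ j, D i j * (log (P i j / M i j) + 1)) 0 := by
  show HasDerivAt (fun t : ℝ => ∑ i, ∑ j, klTerm (M i j) (P i j + t * D i j)) _ 0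
  refine HasDerivAt.fun_sum fun i _ => HasDerivAt.fun_sum fun j _ => ?_
  have hline : HasDerivAt (fun t : ℝ => P i j + t * D i j) (D i j) 0 := by
    simpa using ((hasDerivAt_id' (0 : ℝ)).mul_const (D i j)).const_add (P i j)
  rw [mul_comm]
  exact (hasDerivAt_klTerm (hM i j) (hP i j)).comp_of_eq 0 hline (by simp)

lemma eventually_add_smul_mem_transportPolytope (hPK : P ∈ transportPolytope r c)
    (hP : ∀ i j, 0 < P i j) {D : Matrix (Fin n) (Fin m) ℝ} (hDr : ∀ i, ∑ j, D i j = 0)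
    (hDc : ∀ j, ∑ i, D i j = 0) :
    ∀ᶠ t in 𝓝 (0 : ℝ), P + t • D ∈ transportPolytope r c := by
  have hpos : ∀ᶠ t in 𝓝 (0 : ℝ), ∀ i j, 0 < P i j + t * D i j := by
    simp only [eventually_all]
    intro i j
    have hcont : Continuous fun t : ℝ => P i j + t * D i j := by fun_prop
    have hlim : Tendsto (fun t : ℝ => P i j + t * D i j) (𝓝 0) (𝓝 (P i j)) := by
      simpa using hcont.tendsto 0
    exact hlim.eventually (eventually_gt_nhds (hP i j))
  filter_upwards [hpos] with t ht
  refine ⟨fun i j => (ht i j).le, fun i => ?_, fun j => ?_⟩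
  · simp [sum_add_distrib, ← mul_sum, hPK.2.1 i, hDr i]
  · simp [sum_add_distrib, ← mul_sum, hPK.2.2 j, hDc j]

lemma sum_mul_log_eq_zero_of_isMinOn (hM : ∀ i j, 0 < M i j) (hPK : P ∈ transportPolytope r c)
    (hP : ∀ i j, 0 < P i j) (hmin : IsMinOn (klReal · M) (transportPolytope r c) P)
    {D : Matrix (Fin n) (Fin m) ℝ} (hDr : ∀ i, ∑ j, D i j = 0) (hDc : ∀ j, ∑ i, D i j = 0) :
    ∑ i, ∑ j, D i j * log (P i j / M i j) = 0 := by
  have hloc : IsLocalMin (fun t : ℝ => klReal (P + t • D) M) 0 := by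
    filter_upwards [eventually_add_smul_mem_transportPolytope hPK hP hDr hDc] with t ht
    simpa using isMinOn_iff.1 hmin _ ht
  simpa [mul_add, sum_add_distrib, hDr] using
    hloc.hasDerivAt_eq_zero (hasDerivAt_klReal_add_smul hM hP D)

end firstOrder

/-- Testing against `(eᵢ - eᵢ₀) ⊗ (eⱼ - eⱼ₀)` gives `L i j - L i j₀ - L i₀ j + L i₀ j₀ = 0`. -/
lemma exists_add_of_sum_mul_eq_zero {ι κ : Type*} [Fintype ι] [Fintype κ] (L : Matrix ι κ ℝ)
    (hL : ∀ D : Matrix ι κ ℝ, (∀ i, ∑ j, D i j = 0) → (∀ j, ∑ i, D i j = 0) →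
      ∑ i, ∑ j, D i j * L i j = 0) :
    ∃ (a : ι → ℝ) (b : κ → ℝ), ∀ i j, L i j = a i + b j := by
  classical
  rcases isEmpty_or_nonempty ι with hι | ⟨⟨i₀⟩⟩
  · exact ⟨0, 0, fun i => isEmptyElim i⟩
  rcases isEmpty_or_nonempty κ with hκ | ⟨⟨j₀⟩⟩
  · exact ⟨0, 0, fun _ j => isEmptyElim j⟩
  refine ⟨fun i => L i j₀ - L i₀ j₀, fun j => L i₀ j, fun i j => ?_⟩
  have h := hL (Matrix.vecMulVec (Pi.single i 1 - Pi.single i₀ 1) (Pi.single j 1 - Pi.single j₀ 1))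
    (by simp [Matrix.vecMulVec_apply, ← mul_sum]) (by simp [Matrix.vecMulVec_apply, ← sum_mul])
  simp [Matrix.vecMulVec_apply, sub_mul, mul_sub, sum_sub_distrib, Pi.single_apply] at h
  linarith

/-- For a strictly positive matrix `M` and strictly positive probability vectors `r`,
`c`, there is a unique minimizer `Φ(M,r,c)` of `D_KL(P‖M)` over `P ∈ U(r,c)`; moreover
this minimizer has strictly positive entries and is a diagonal scaling of `M`. -/
theorem exists_unique_kl_projection {n m : ℕ} (M : Matrix (Fin n) (Fin m) ℝ)
    (hM : ∀ i j, 0 < M i j) (r : Fin n → ℝ) (c : Fin m → ℝ)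
    (hr : ∀ i, 0 < r i) (hc : ∀ j, 0 < c j)
    (hr1 : ∑ i, r i = 1) (hc1 : ∑ j, c j = 1) :
    ∃ P : Matrix (Fin n) (Fin m) ℝ,
      (P ∈ transportPolytope r c ∧ ∀ Q ∈ transportPolytope r c, klReal P M ≤ klReal Q M) ∧
      (∀ P' : Matrix (Fin n) (Fin m) ℝ,
        (P' ∈ transportPolytope r c ∧
          ∀ Q ∈ transportPolytope r c, klReal P' M ≤ klReal Q M) → P' = P) ∧
      (∀ i j, 0 < P i j) ∧
      (∃ (u : Fin n → ℝ) (v : Fin m → ℝ), (∀ i, 0 < u i) ∧ (∀ j, 0 < v j) ∧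
        ∀ i j, P i j = u i * M i j * v j) := by
  have hR := vecMulVec_mem_transportPolytope r c (fun i => (hr i).le) (fun j => (hc j).le) hr1 hc1
  obtain ⟨P, hPK, hPmin⟩ := (isCompact_transportPolytope r c).exists_isMinOn ⟨_, hR⟩
    (continuous_klReal hM).continuousOn
  have hPpos : ∀ i j, 0 < P i j :=
    pos_of_isMinOn_klReal hM (convex_transportPolytope r c) (fun Q hQ => hQ.1) hR
      (fun i j => mul_pos (hr i) (hc j)) hPK hPmin
  refine ⟨P, ⟨hPK, isMinOn_iff.1 hPmin⟩, fun P' ⟨hP'K, hP'min⟩ => ?_, hPpos, ?_⟩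
  · exact ((strictConvexOn_klReal hM).subset (fun Q hQ => hQ.1) (convex_transportPolytope r c))
      |>.eq_of_isMinOn (isMinOn_iff.2 hP'min) hPmin hP'K hPK
  · obtain ⟨a, b, hab⟩ := exists_add_of_sum_mul_eq_zero (fun i j => log (P i j / M i j))
      fun D hDr hDc => sum_mul_log_eq_zero_of_isMinOn hM hPK hPpos hPmin hDr hDc
    refine ⟨fun i => exp (a i), fun j => exp (b j), fun _ => exp_pos _, fun _ => exp_pos _,
      fun i j => ?_⟩
    rw [mul_right_comm, ← exp_add, ← hab, exp_log (div_pos (hPpos i j) (hM i j))]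
    field_simp [(hM i j).ne']
end

section
/- (Theorem 1, smoothness.) Let D be the set of triples (M, r, c) where M is an n×m matrix with strictly positive entries and r ∈ ℝ^n, c ∈ ℝ^m have strictly positive entries with Σ_i r_i = Σ_j c_j, and let Φ(M,r,c) denote the unique matrix of the form diag(u)·M·diag(v) (u, v strictly positive) with row sums r and column sums c. Then Φ : D → ℝ^{n×m} is infinitely differentiable (C^∞) on D, viewed as a relatively open subset of the affine subspace {(M,r,c) : Σ_i r_i = Σ_j c_j} of ℝ^{n×m} × ℝ^n × ℝ^m. -/
/-!
With `b ∈ ℝ^κ` the logarithm of the column scaling, the row scaling is forced and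
`rowScaling M r b = diag(r / M e^b) · M · diag(e^b)` has row sums `r`. Its column sums are `c`
exactly at a zero of `residual`, the gradient of the potential
`∑ᵢ rᵢ log (M e^b)ᵢ + (∑ b)² / 2 - ⟨c, b⟩`, which is coercive, so a minimiser exists.
Two scalings `P, Q` of `M` with the same marginals satisfy `∑ (P - Q)(log P - log Q) = 0`, whence
`P = Q`. Pairing the `b`-derivative of the residual with `d` gives the row-wise variances of `d`
plus `(∑ d)²`, so this derivative is injective and the implicit function theorem yields a smooth
local zero `b(M, r, c)`; by uniqueness `Φ = rowScaling M r b(M, r, c)` near every point.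
-/

open Real Finset Filter Topology
open scoped ContDiff

/-- The domain `D`: triples `(M, r, c)` with the `n × m` matrix `M` (represented as a
function `Fin n → Fin m → ℝ`) entrywise strictly positive and `r`, `c` strictly
positive with `Σ_i r_i = Σ_j c_j`. -/
def sinkhornDomain (n m : ℕ) :
    Set ((Fin n → Fin m → ℝ) × (Fin n → ℝ) × (Fin m → ℝ)) :=
  {x | (∀ i j, 0 < x.1 i j) ∧ (∀ i, 0 < x.2.1 i) ∧ (∀ j, 0 < x.2.2 j) ∧
    ∑ i, x.2.1 i = ∑ j, x.2.2 j}

theorem sub_mul_log_sub_log_pos {a b : ℝ} (ha : 0 < a) (hb : 0 < b) (hab : a ≠ b) :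
    0 < (a - b) * (log a - log b) := by
  rcases hab.lt_or_gt with h | h
  · exact mul_pos_of_neg_of_neg (sub_neg.2 h) (sub_neg.2 (log_lt_log ha h))
  · exact mul_pos (sub_pos.2 h) (sub_pos.2 (log_lt_log hb h))

theorem sub_mul_log_sub_log_nonneg {a b : ℝ} (ha : 0 < a) (hb : 0 < b) :
    0 ≤ (a - b) * (log a - log b) := by
  rcases eq_or_ne a b with rfl | hab
  · simp
  · exact (sub_mul_log_sub_log_pos ha hb hab).le

theorem hasDerivAt_add_smul_apply {κ : Type*} (b d : κ → ℝ) (k : κ) :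
    HasDerivAt (fun t : ℝ => (b + t • d) k) (d k) 0 := by
  simpa using (hasDerivAt_mul_const (d k)).const_add (b k)

theorem ContinuousLinearMap.isInvertible_of_injective {E : Type*} [NormedAddCommGroup E]
    [NormedSpace ℝ E] [FiniteDimensional ℝ E] {f : E →L[ℝ] E} (hf : Function.Injective f) :
    f.IsInvertible :=
  ⟨(LinearEquiv.ofInjectiveEndo f.toLinearMap hf).toContinuousLinearEquiv, rfl⟩

theorem norm_le_abs_sum_add_two_mul_sum_sup'_sub {κ : Type*} [Fintype κ] [Nonempty κ]
    (b : κ → ℝ) : ‖b‖ ≤ |∑ k, b k| + 2 * ∑ k, (univ.sup' univ_nonempty b - b k) := by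
  set A := univ.sup' univ_nonempty b
  set S := ∑ k, b k
  set Q := ∑ k, (A - b k)
  have hgap (k : κ) : 0 ≤ A - b k := sub_nonneg.2 (le_sup' b (mem_univ k))
  have hgapQ (k : κ) : A - b k ≤ Q := single_le_sum (fun j _ => hgap j) (mem_univ k)
  have hQ : 0 ≤ Q := sum_nonneg fun k _ => hgap k
  have hcard : (1 : ℝ) ≤ Fintype.card κ := by exact_mod_cast Fintype.card_pos
  have hAQ : Fintype.card κ * A = S + Q := by simp [Q, S, sum_sub_distrib]
  have hA : |A| ≤ |S| + Q := by
    rw [abs_le]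
    rcases le_total 0 A with h | h <;> constructor <;> nlinarith [le_abs_self S, neg_abs_le S]
  refine (pi_norm_le_iff_of_nonneg (by positivity)).2 fun k => ?_
  rw [Real.norm_eq_abs, abs_le]
  constructor <;> linarith [hgap k, hgapQ k, abs_le.1 hA]

namespace Sinkhorn

variable {ι κ : Type*} [Fintype κ]

section RowScaling

variable (M : ι → κ → ℝ) (r : ι → ℝ) (b d : κ → ℝ)

noncomputable def scaledRowSum (i : ι) : ℝ := ∑ k, M i k * exp (b k)

noncomputable def rowScaling (i : ι) (j : κ) : ℝ := r i / scaledRowSum M b i * M i j * exp (b j)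

noncomputable def scaledRowMean (i : ι) : ℝ := (∑ k, M i k * exp (b k) * d k) / scaledRowSum M b i

variable {M r}

theorem scaledRowSum_pos [Nonempty κ] (hM : ∀ i j, 0 < M i j) (i : ι) : 0 < scaledRowSum M b i :=
  sum_pos (fun k _ => mul_pos (hM i k) (exp_pos _)) univ_nonempty

theorem sum_rowScaling [Nonempty κ] (hM : ∀ i j, 0 < M i j) (i : ι) :
    ∑ j, rowScaling M r b i j = r i := by
  simp_rw [rowScaling, mul_assoc, ← mul_sum]
  exact div_mul_cancel₀ _ (scaledRowSum_pos b hM i).ne'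

theorem hasDerivAt_scaledRowSum (i : ι) :
    HasDerivAt (fun t : ℝ => scaledRowSum M (b + t • d) i) (∑ k, M i k * exp (b k) * d k) 0 :=
  HasDerivAt.fun_sum fun k _ =>
    ((hasDerivAt_add_smul_apply b d k).exp.const_mul (M i k)).congr_deriv
      (by rw [zero_smul, add_zero]; ring)

theorem hasDerivAt_rowScaling [Nonempty κ] (hM : ∀ i j, 0 < M i j) (i : ι) (j : κ) :
    HasDerivAt (fun t : ℝ => rowScaling M r (b + t • d) i j)
      (rowScaling M r b i j * (d j - scaledRowMean M b d i)) 0 := by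
  have hL := (scaledRowSum_pos b hM i).ne'
  refine ((((hasDerivAt_const 0 (r i)).div (hasDerivAt_scaledRowSum b d i)
    (by simpa using hL)).mul_const (M i j)).mul
    (hasDerivAt_add_smul_apply b d j).exp).congr_deriv ?_
  simp only [zero_smul, add_zero, Pi.div_apply, rowScaling, scaledRowMean]
  field_simp
  ring

theorem sum_rowScaling_mul_sub_scaledRowMean [Nonempty κ] (hM : ∀ i j, 0 < M i j) (i : ι) :
    ∑ j, rowScaling M r b i j * (d j - scaledRowMean M b d i) = 0 := by
  have hmean : ∑ j, rowScaling M r b i j * d j = r i * scaledRowMean M b d i := by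
    rw [scaledRowMean, sum_div, mul_sum]
    exact sum_congr rfl fun j _ => by rw [rowScaling]; ring
  simp only [mul_sub, sum_sub_distrib, ← sum_mul, hmean, sum_rowScaling b hM i, sub_self]

end RowScaling

variable [Fintype ι]

theorem nonempty_of_sum_eq_sum [Nonempty ι] {r : ι → ℝ} {c : κ → ℝ} (hr : ∀ i, 0 < r i)
    (hrc : ∑ i, r i = ∑ j, c j) : Nonempty κ := by
  by_contra h
  rw [not_nonempty_iff] at h
  have := sum_pos (fun i _ => hr i) univ_nonempty
  simp [hrc] at this

def IsScaling (M : ι → κ → ℝ) (r : ι → ℝ) (c : κ → ℝ) (P : ι → κ → ℝ) : Prop :=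
  ∃ (u : ι → ℝ) (v : κ → ℝ), (∀ i, 0 < u i) ∧ (∀ j, 0 < v j) ∧
    (∀ i j, P i j = u i * M i j * v j) ∧ (∀ i, ∑ j, P i j = r i) ∧ (∀ j, ∑ i, P i j = c j)

theorem IsScaling.unique {M : ι → κ → ℝ} {r : ι → ℝ} {c : κ → ℝ} {P Q : ι → κ → ℝ}
    (hM : ∀ i j, 0 < M i j) (hP : IsScaling M r c P) (hQ : IsScaling M r c Q) : P = Q := by
  obtain ⟨u, v, hu, hv, hPuv, hPr, hPc⟩ := hP
  obtain ⟨u', v', hu', hv', hQuv, hQr, hQc⟩ := hQ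
  have hPpos (i j) : 0 < P i j := hPuv i j ▸ mul_pos (mul_pos (hu i) (hM i j)) (hv j)
  have hQpos (i j) : 0 < Q i j := hQuv i j ▸ mul_pos (mul_pos (hu' i) (hM i j)) (hv' j)
  have hlog (i j) : log (P i j) - log (Q i j) =
      (log (u i) - log (u' i)) + (log (v j) - log (v' j)) := by
    have := hM i j; have := hu i; have := hv j; have := hu' i; have := hv' j
    rw [hPuv, hQuv, log_mul, log_mul, log_mul, log_mul] <;> first | positivity | ring
  have hzero : ∑ i, ∑ j, (P i j - Q i j) * (log (P i j) - log (Q i j)) = 0 := by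
    simp_rw [hlog, mul_add, sum_add_distrib]
    rw [sum_comm (f := fun i j => (P i j - Q i j) * (log (v j) - log (v' j)))]
    simp_rw [← sum_mul, sum_sub_distrib, hPr, hQr, hPc, hQc, sub_self, zero_mul, sum_const_zero,
      add_zero]
  have hrow := (Fintype.sum_eq_zero_iff_of_nonneg fun i =>
    sum_nonneg fun j _ => sub_mul_log_sub_log_nonneg (hPpos i j) (hQpos i j)).1 hzero
  funext i j
  by_contra hne
  refine (sub_mul_log_sub_log_pos (hPpos i j) (hQpos i j) hne).ne' ?_
  exact congrFun ((Fintype.sum_eq_zero_iff_of_nonneg fun j =>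
    sub_mul_log_sub_log_nonneg (hPpos i j) (hQpos i j)).1 (congrFun hrow i)) j

section Residual

variable (M : ι → κ → ℝ) (r : ι → ℝ) (c : κ → ℝ) (b d : κ → ℝ)

/-- The gauge term `∑ b` removes the invariance `b ↦ b + t` of `rowScaling`; it vanishes at a zero
of the residual because the total masses of `r` and `c` agree. -/
noncomputable def residual : κ → ℝ := fun j => ∑ i, rowScaling M r b i j + ∑ k, b k - c j

noncomputable def residualDeriv : κ → ℝ :=
  fun j => ∑ i, rowScaling M r b i j * (d j - scaledRowMean M b d i) + ∑ k, d k

noncomputable def potential : ℝ :=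
  ∑ i, r i * log (scaledRowSum M b i) + (∑ k, b k) ^ 2 / 2 - ∑ j, c j * b j

variable {M r c}

theorem sum_residual [Nonempty κ] (hM : ∀ i j, 0 < M i j) (hrc : ∑ i, r i = ∑ j, c j) :
    ∑ j, residual M r c b j = Fintype.card κ * ∑ k, b k := by
  simp only [residual, sum_sub_distrib, sum_add_distrib]
  rw [sum_comm, sum_congr rfl fun i _ => sum_rowScaling b hM i, hrc]
  simp

theorem isScaling_rowScaling [Nonempty κ] (hM : ∀ i j, 0 < M i j) (hr : ∀ i, 0 < r i)
    (hrc : ∑ i, r i = ∑ j, c j) (hb : residual M r c b = 0) :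
    IsScaling M r c (rowScaling M r b) := by
  have hsum : ∑ k, b k = 0 := by
    simpa [hb, Fintype.card_ne_zero, eq_comm] using sum_residual b hM hrc
  refine ⟨fun i => r i / scaledRowSum M b i, fun j => exp (b j),
    fun i => div_pos (hr i) (scaledRowSum_pos b hM i), fun j => exp_pos _, fun i j => rfl,
    sum_rowScaling b hM, fun j => ?_⟩
  have := congrFun hb j
  simp only [residual, hsum, Pi.zero_apply] at this
  linarith

theorem hasDerivAt_potential [Nonempty κ] (hM : ∀ i j, 0 < M i j) :
    HasDerivAt (fun t : ℝ => potential M r c (b + t • d)) (∑ j, d j * residual M r c b j) 0 := by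
  have hlog := HasDerivAt.fun_sum fun i (_ : i ∈ univ) =>
    ((hasDerivAt_scaledRowSum b d i).log
      (by simpa using (scaledRowSum_pos b hM i).ne')).const_mul (r i)
  have hsum := HasDerivAt.fun_sum fun k (_ : k ∈ univ) => hasDerivAt_add_smul_apply b d k
  have hlin := HasDerivAt.fun_sum fun j (_ : j ∈ univ) =>
    (hasDerivAt_add_smul_apply b d j).const_mul (c j)
  refine ((hlog.add ((hsum.pow 2).div_const 2)).sub hlin).congr_deriv ?_
  simp only [zero_smul, add_zero, residual, mul_add, mul_sub, sum_add_distrib, sum_sub_distrib]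
  congr 1
  congr 1
  · simp only [rowScaling, mul_div_assoc', sum_div, mul_sum]
    rw [sum_comm]
    exact sum_congr rfl fun i _ => sum_congr rfl fun k _ => by ring
  · simp only [Nat.cast_ofNat, pow_one, Nat.add_one_sub_one, ← sum_mul]
    ring
  · simp only [mul_comm]

theorem continuous_potential [Nonempty κ] (hM : ∀ i j, 0 < M i j) :
    Continuous (potential M r c) := by
  have := (scaledRowSum_pos · hM)
  unfold potential scaledRowSum at *
  fun_prop (disch := exact fun x => (this x _).ne')

theorem potential_ge [Nonempty κ] (hM : ∀ i j, 0 < M i j) (hr : ∀ i, 0 ≤ r i)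
    (hrc : ∑ i, r i = ∑ j, c j) :
    ∑ i, r i * univ.inf' univ_nonempty (fun j => log (M i j)) +
      ∑ j, c j * (univ.sup' univ_nonempty b - b j) + (∑ k, b k) ^ 2 / 2 ≤ potential M r c b := by
  obtain ⟨jA, -, hjA⟩ := exists_mem_eq_sup' univ_nonempty b
  set A := univ.sup' univ_nonempty b
  set K := fun i => univ.inf' univ_nonempty (fun j => log (M i j))
  have hrow (i : ι) : K i + A ≤ log (scaledRowSum M b i) := by
    have := hM i jA
    calc K i + A ≤ log (M i jA) + b jA := by rw [hjA]; gcongr; exact inf'_le _ (mem_univ jA)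
      _ = log (M i jA * exp (b jA)) := by rw [log_mul (hM i jA).ne' (exp_pos _).ne', log_exp]
      _ ≤ log (scaledRowSum M b i) := log_le_log (by positivity)
          (single_le_sum (fun k _ => (mul_pos (hM i k) (exp_pos _)).le) (mem_univ jA))
  have hsum := sum_le_sum fun i (_ : i ∈ univ) => mul_le_mul_of_nonneg_left (hrow i) (hr i)
  have e1 : ∑ i, r i * (K i + A) = ∑ i, r i * K i + ∑ j, c j * A := by
    simp only [mul_add, sum_add_distrib, ← sum_mul, hrc]
  have e2 : ∑ j, c j * (A - b j) = ∑ j, c j * A - ∑ j, c j * b j := by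
    simp only [mul_sub, sum_sub_distrib]
  simp only [potential]
  linarith

theorem tendsto_potential_cocompact [Nonempty κ] (hM : ∀ i j, 0 < M i j) (hr : ∀ i, 0 ≤ r i)
    (hc : ∀ j, 0 < c j) (hrc : ∑ i, r i = ∑ j, c j) :
    Tendsto (potential M r c) (cocompact _) atTop := by
  set c₀ := univ.inf' univ_nonempty c
  have hc₀ : 0 < c₀ := (lt_inf'_iff _).2 fun j _ => hc j
  set K := ∑ i, r i * univ.inf' univ_nonempty (fun j => log (M i j))
  set α := min (c₀ / 2) 1
  have hα : 0 < α := lt_min (by positivity) one_pos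
  have hbound (b : κ → ℝ) : K - 1 / 2 + α * ‖b‖ ≤ potential M r c b := by
    set A := univ.sup' univ_nonempty b
    set S := ∑ k, b k
    set Q := ∑ k, (A - b k)
    have hgap (k : κ) : 0 ≤ A - b k := sub_nonneg.2 (le_sup' b (mem_univ k))
    have hQ : c₀ * Q ≤ ∑ j, c j * (A - b j) := by
      rw [mul_sum]
      exact sum_le_sum fun j _ => mul_le_mul_of_nonneg_right (inf'_le _ (mem_univ j)) (hgap j)
    have hS : |S| - 1 / 2 ≤ S ^ 2 / 2 := by nlinarith [sq_abs S, sq_nonneg (|S| - 1)]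
    have hα₁ : α * |S| ≤ |S| := mul_le_of_le_one_left (abs_nonneg S) (min_le_right _ _)
    have hα₂ : α * (2 * Q) ≤ c₀ * Q := by
      have := sum_nonneg fun k (_ : k ∈ univ) => hgap k
      nlinarith [min_le_left (c₀ / 2) 1]
    have := mul_le_mul_of_nonneg_left (norm_le_abs_sum_add_two_mul_sum_sup'_sub b) hα.le
    linarith [potential_ge b hM hr hrc]
  exact tendsto_atTop_mono hbound
    (tendsto_atTop_add_const_left _ _ (tendsto_norm_cocompact_atTop.const_mul_atTop hα))

theorem exists_residual_eq_zero [Nonempty κ] (hM : ∀ i j, 0 < M i j) (hr : ∀ i, 0 ≤ r i)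
    (hc : ∀ j, 0 < c j) (hrc : ∑ i, r i = ∑ j, c j) : ∃ b, residual M r c b = 0 := by
  obtain ⟨b, hb⟩ :=
    (continuous_potential hM).exists_forall_le (tendsto_potential_cocompact hM hr hc hrc)
  refine ⟨b, ?_⟩
  -- along the direction `residual b` the slope of the potential at `b` is `‖residual b‖²`
  have hmin : IsLocalMin (fun t : ℝ => potential M r c (b + t • residual M r c b)) 0 :=
    Eventually.of_forall fun t => by simpa using hb _
  have hslope := hmin.hasDerivAt_eq_zero (hasDerivAt_potential b _ hM)
  rw [Fintype.sum_eq_zero_iff_of_nonneg fun j => mul_self_nonneg _] at hslope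
  exact funext fun j => mul_self_eq_zero.1 (congrFun hslope j)

theorem hasDerivAt_residual [Nonempty κ] (hM : ∀ i j, 0 < M i j) :
    HasDerivAt (fun t : ℝ => residual M r c (b + t • d)) (residualDeriv M r b d) 0 :=
  hasDerivAt_pi.2 fun j =>
    ((HasDerivAt.fun_sum fun i _ => hasDerivAt_rowScaling b d hM i j).add
      (HasDerivAt.fun_sum fun k _ => hasDerivAt_add_smul_apply b d k)).sub_const (c j)

theorem sum_mul_residualDeriv [Nonempty κ] (hM : ∀ i j, 0 < M i j) :
    ∑ j, d j * residualDeriv M r b d j =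
      ∑ i, ∑ j, rowScaling M r b i j * (d j - scaledRowMean M b d i) ^ 2 + (∑ k, d k) ^ 2 := by
  set μ := scaledRowMean M b d
  set P := rowScaling M r b
  have hrow (i : ι) : ∑ j, P i j * (d j - μ i) ^ 2 = ∑ j, d j * (P i j * (d j - μ i)) := by
    calc _ = ∑ j, (d j * (P i j * (d j - μ i)) - μ i * (P i j * (d j - μ i))) :=
          sum_congr rfl fun j _ => by ring
      _ = _ := by
        rw [sum_sub_distrib, ← mul_sum, sum_rowScaling_mul_sub_scaledRowMean b d hM i, mul_zero,
          sub_zero]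
  rw [sum_congr rfl fun i _ => hrow i, sq, sum_mul, sum_comm]
  simp only [residualDeriv, mul_add, sum_add_distrib, mul_sum, P, μ]

theorem eq_zero_of_residualDeriv_eq_zero [Nonempty ι] [Nonempty κ] (hM : ∀ i j, 0 < M i j)
    (hr : ∀ i, 0 < r i) {d : κ → ℝ} (hd : residualDeriv M r b d = 0) : d = 0 := by
  set μ := scaledRowMean M b d
  set P := rowScaling M r b
  have hP (i : ι) (j : κ) : 0 < P i j := by
    have := scaledRowSum_pos b hM i; have := hr i; have := hM i j
    simp only [P, rowScaling]; positivity
  have hterm (i : ι) (j : κ) : 0 ≤ P i j * (d j - μ i) ^ 2 := mul_nonneg (hP i j).le (sq_nonneg _)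
  have htotal := sum_mul_residualDeriv b d (r := r) hM
  rw [hd] at htotal
  simp only [Pi.zero_apply, mul_zero, sum_const_zero] at htotal
  obtain ⟨hvar, hsum⟩ := (add_eq_zero_iff_of_nonneg
    (sum_nonneg fun i _ => sum_nonneg fun j _ => hterm i j) (sq_nonneg _)).1 htotal.symm
  have hconst (i : ι) (j : κ) : d j = μ i := by
    have := (sum_eq_zero_iff_of_nonneg fun j _ => hterm i j).1
      ((sum_eq_zero_iff_of_nonneg fun i _ => sum_nonneg fun j _ => hterm i j).1 hvar i
        (mem_univ i)) j (mem_univ j)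
    rw [mul_eq_zero, sq_eq_zero_iff, sub_eq_zero] at this
    exact this.resolve_left (hP i j).ne'
  obtain ⟨i₀⟩ := ‹Nonempty ι›
  have hμ : μ i₀ = 0 := by
    rw [sq_eq_zero_iff, sum_congr rfl fun k _ => hconst i₀ k, sum_const, card_univ,
      nsmul_eq_mul, mul_eq_zero] at hsum
    exact hsum.resolve_left (Nat.cast_ne_zero.2 Fintype.card_ne_zero)
  exact funext fun j => (hconst i₀ j).trans hμ

end Residual

theorem contDiffAt_rowScaling [Nonempty κ]
    {y : ((ι → κ → ℝ) × (ι → ℝ) × (κ → ℝ)) × (κ → ℝ)} (hM : ∀ i j, 0 < y.1.1 i j) :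
    ContDiffAt ℝ ∞ (fun y =>
      rowScaling y.1.1 y.1.2.1 y.2) y := by
  have := (scaledRowSum_pos y.2 hM ·)
  unfold rowScaling scaledRowSum at *
  fun_prop (disch := exact (this _).ne')

theorem contDiffAt_residual [Nonempty κ]
    {y : ((ι → κ → ℝ) × (ι → ℝ) × (κ → ℝ)) × (κ → ℝ)} (hM : ∀ i j, 0 < y.1.1 i j) :
    ContDiffAt ℝ ∞ (fun y =>
      residual y.1.1 y.1.2.1 y.1.2.2 y.2) y := by
  have := (scaledRowSum_pos y.2 hM ·)
  unfold residual rowScaling scaledRowSum at *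
  fun_prop (disch := exact (this _).ne')

theorem isInvertible_fderiv_residual [Nonempty ι] [Nonempty κ]
    {x : (ι → κ → ℝ) × (ι → ℝ) × (κ → ℝ)} (b : κ → ℝ) (hM : ∀ i j, 0 < x.1 i j)
    (hr : ∀ i, 0 < x.2.1 i) :
    (fderiv ℝ (fun y => residual y.1.1 y.1.2.1 y.1.2.2 y.2) (x, b) ∘L .inr ℝ _ _).IsInvertible := by
  refine ContinuousLinearMap.isInvertible_of_injective
    ((injective_iff_map_eq_zero _).2 fun d hd => ?_)
  have hline : HasLineDerivAt ℝ (fun y : ((ι → κ → ℝ) × (ι → ℝ) × (κ → ℝ)) × (κ → ℝ) =>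
      residual y.1.1 y.1.2.1 y.1.2.2 y.2) (residualDeriv x.1 x.2.1 b d) (x, b) (0, d) := by
    simpa [HasLineDerivAt] using hasDerivAt_residual (c := x.2.2) b d hM
  rw [ContinuousLinearMap.comp_apply, ContinuousLinearMap.inr_apply,
    ← ((contDiffAt_residual (y := (x, b)) hM).differentiableAt (by simp)).lineDeriv_eq_fderiv,
    hline.lineDeriv] at hd
  exact eq_zero_of_residualDeriv_eq_zero b hM hr hd

theorem exists_isScaling {M : ι → κ → ℝ} {r : ι → ℝ} {c : κ → ℝ} (hM : ∀ i j, 0 < M i j)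
    (hr : ∀ i, 0 < r i) (hc : ∀ j, 0 < c j) (hrc : ∑ i, r i = ∑ j, c j) :
    ∃ P, IsScaling M r c P := by
  rcases isEmpty_or_nonempty κ with hκ | hκ
  · have : IsEmpty ι := not_nonempty_iff.1 fun _ =>
      not_nonempty_iff.2 hκ (nonempty_of_sum_eq_sum hr hrc)
    exact ⟨0, 1, 1, by simp, by simp, by simp, by simp, by simp⟩
  · obtain ⟨b, hb⟩ := exists_residual_eq_zero hM (fun i => (hr i).le) hc hrc
    exact ⟨_, isScaling_rowScaling b hM hr hrc hb⟩

open Classical in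
noncomputable def sinkhorn (M : ι → κ → ℝ) (r : ι → ℝ) (c : κ → ℝ) : ι → κ → ℝ :=
  if h : ∃ P, IsScaling M r c P then h.choose else 0

theorem sinkhorn_eq {M : ι → κ → ℝ} {r : ι → ℝ} {c : κ → ℝ} {P : ι → κ → ℝ}
    (hM : ∀ i j, 0 < M i j) (hP : IsScaling M r c P) : sinkhorn M r c = P := by
  have h : ∃ P, IsScaling M r c P := ⟨P, hP⟩
  rw [sinkhorn, dif_pos h]
  exact h.choose_spec.unique hM hP

theorem isScaling_sinkhorn {M : ι → κ → ℝ} {r : ι → ℝ} {c : κ → ℝ} (hM : ∀ i j, 0 < M i j)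
    (hr : ∀ i, 0 < r i) (hc : ∀ j, 0 < c j) (hrc : ∑ i, r i = ∑ j, c j) :
    IsScaling M r c (sinkhorn M r c) := by
  obtain ⟨P, hP⟩ := exists_isScaling hM hr hc hrc
  rwa [sinkhorn_eq hM hP]

theorem contDiffWithinAt_sinkhorn {n m : ℕ}
    {x₀ : (Fin n → Fin m → ℝ) × (Fin n → ℝ) × (Fin m → ℝ)} (hx₀ : x₀ ∈ sinkhornDomain n m) :
    ContDiffWithinAt ℝ ∞ (fun x => sinkhorn x.1 x.2.1 x.2.2) (sinkhornDomain n m) x₀ := by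
  obtain ⟨hM, hr, hc, hrc⟩ := hx₀
  rcases isEmpty_or_nonempty (Fin m) with hm | hm
  · exact contDiffWithinAt_of_subsingleton
  have : Nonempty (Fin n) := nonempty_of_sum_eq_sum hc hrc.symm
  obtain ⟨b₀, hb₀⟩ := exists_residual_eq_zero hM (fun i => (hr i).le) hc hrc
  have hF := contDiffAt_residual (y := (x₀, b₀)) hM
  have hinv := isInvertible_fderiv_residual b₀ hM hr
  set g := hF.implicitFunction (by simp) hinv
  have hsol : ∀ᶠ x in 𝓝 x₀, residual x.1 x.2.1 x.2.2 (g x) = 0 := by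
    simpa [hb₀] using hF.eventually_apply_implicitFunction (by simp) hinv
  have hsmooth : ContDiffAt ℝ ∞ (fun x => rowScaling x.1 x.2.1 (g x)) x₀ :=
    (contDiffAt_rowScaling (y := (x₀, g x₀)) hM).comp (f := fun x => (x, g x)) x₀
      (contDiffAt_id.prodMk (hF.contDiffAt_implicitFunction (by simp) hinv))
  have heq : ∀ x ∈ sinkhornDomain n m, residual x.1 x.2.1 x.2.2 (g x) = 0 →
      sinkhorn x.1 x.2.1 x.2.2 = rowScaling x.1 x.2.1 (g x) :=
    fun x ⟨hM, hr, _, hrc⟩ hx => sinkhorn_eq hM (isScaling_rowScaling _ hM hr hrc hx)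
  exact hsmooth.contDiffWithinAt.congr_of_eventuallyEq
    (eventually_nhdsWithin_iff.2 (hsol.mono fun x hx hxD => heq x hxD hx))
    (heq x₀ ⟨hM, hr, hc, hrc⟩ hsol.self_of_nhds)

end Sinkhorn

/-- Theorem 1 (smoothness): the Sinkhorn scaling map `Φ`, sending `(M, r, c)` in the
domain `D` to the unique diagonal scaling `diag(u)·M·diag(v)` of `M` with row sums `r`
and column sums `c`, is infinitely differentiable (`C^∞`) on `D`. -/
theorem phi_smooth (n m : ℕ) :
    ∃ Φ : (Fin n → Fin m → ℝ) × (Fin n → ℝ) × (Fin m → ℝ) → (Fin n → Fin m → ℝ),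
      (∀ x ∈ sinkhornDomain n m,
        ∃ (u : Fin n → ℝ) (v : Fin m → ℝ), (∀ i, 0 < u i) ∧ (∀ j, 0 < v j) ∧
          (∀ i j, Φ x i j = u i * x.1 i j * v j) ∧
          (∀ i, ∑ j, Φ x i j = x.2.1 i) ∧
          (∀ j, ∑ i, Φ x i j = x.2.2 j)) ∧
      ContDiffOn ℝ (⊤ : ℕ∞) Φ (sinkhornDomain n m) :=
  ⟨fun x => Sinkhorn.sinkhorn x.1 x.2.1 x.2.2,
    fun _ ⟨hM, hr, hc, hrc⟩ => Sinkhorn.isScaling_sinkhorn hM hr hc hrc,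
    fun _ hx => Sinkhorn.contDiffWithinAt_sinkhorn hx⟩
end
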